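/- There exists a constant C > 0 such that the following holds for every γ ∈ ℝ, all real numbers E, F ≥ 0 and all integers k₁, k₂, k₃: if k_max > 8·max{|γ|E, |γ|F}, (k₁+k₂)(k₂+k₃)(k₁+k₃) ≠ 0, and there exist i, j ∈ {1,2,3} with |k_i| > 8|k_j|, then Φ_{γ,E}^{(3)}(k₁,k₂,k₃) ≠ 0, Φ_{γ,F}^{(3)}(k₁,k₂,k₃) ≠ 0, |Φ_{γ,E}^{(3)}(k₁,k₂,k₃)| ≥ C⁻¹ · min{|k₁+k₂|, |k₁+k₃|, |k₂+k₃|} · k_max⁴, and |1/Φ_{γ,E}^{(3)}(k₁,k₂,k₃) − 1/Φ_{γ,F}^{(3)}(k₁,k₂,k₃)| ≤ C·|γ|·|E−F|·k_max^{−2} · min{1/|Φ_{γ,E}^{(3)}(k₁,k₂,k₃)|, 1/|Φ_{γ,F}^{(3)}(k₁,k₂,k₃)|}. -/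

import Mathlib

/-- The linear symbol `φ_{γ,E}(k) = -i k⁵ + 2 i γ E k³`. -/
noncomputable def phiFn (γ E : ℝ) (k : ℤ) : ℂ :=
  -Complex.I * (k : ℂ) ^ 5 + 2 * Complex.I * (γ : ℂ) * (E : ℂ) * (k : ℂ) ^ 3

/-- The cubic phase function `Φ_{γ,E}^{(3)}`. -/
noncomputable def Phi3 (γ E : ℝ) (k₁ k₂ k₃ : ℤ) : ℂ :=
  phiFn γ E (k₁ + k₂ + k₃) - phiFn γ E k₁ - phiFn γ E k₂ - phiFn γ E k₃

lemma phi_eq (γ E : ℝ) (k₁ k₂ k₃ : ℤ) :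
    Phi3 γ E k₁ k₂ k₃ = -Complex.I * (((k₁ + k₂) * (k₂ + k₃) * (k₁ + k₃) : ℤ) : ℂ) *
      ((5/2 * ((k₁:ℝ)^2 + (k₂:ℝ)^2 + (k₃:ℝ)^2 + ((k₁:ℝ)+(k₂:ℝ)+(k₃:ℝ))^2) - 6*γ*E : ℝ) : ℂ) := by
  unfold Phi3 phiFn
  push_cast
  ring

lemma phi_abs (γ E : ℝ) (k₁ k₂ k₃ : ℤ) :
    ‖Phi3 γ E k₁ k₂ k₃‖ = |(((k₁ + k₂) * (k₂ + k₃) * (k₁ + k₃) : ℤ) : ℝ)| *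
      |5/2 * ((k₁:ℝ)^2 + (k₂:ℝ)^2 + (k₃:ℝ)^2 + ((k₁:ℝ)+(k₂:ℝ)+(k₃:ℝ))^2) - 6*γ*E| := by
  rw [phi_eq, norm_mul, norm_mul, norm_neg, Complex.norm_I, one_mul, Complex.norm_intCast,
    Complex.norm_real, Real.norm_eq_abs]

lemma twoBig (k₁ k₂ k₃ : ℤ)
    (h : 8 * |k₂| < |k₁| ∨ 8 * |k₃| < |k₁| ∨ 8 * |k₁| < |k₂| ∨
      8 * |k₃| < |k₂| ∨ 8 * |k₁| < |k₃| ∨ 8 * |k₂| < |k₃|) :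
    (3 * max |k₁| (max |k₂| |k₃|) ≤ 8 * |k₁ + k₂| ∧ 3 * max |k₁| (max |k₂| |k₃|) ≤ 8 * |k₁ + k₃|) ∨
    (3 * max |k₁| (max |k₂| |k₃|) ≤ 8 * |k₁ + k₂| ∧ 3 * max |k₁| (max |k₂| |k₃|) ≤ 8 * |k₂ + k₃|) ∨
    (3 * max |k₁| (max |k₂| |k₃|) ≤ 8 * |k₁ + k₃| ∧ 3 * max |k₁| (max |k₂| |k₃|) ≤ 8 * |k₂ + k₃|) := by
  simp only [Int.abs_eq_natAbs] at *
  omega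

set_option maxHeartbeats 1000000 in
theorem stmt1 :
    ∃ C : ℝ, 0 < C ∧
      ∀ (γ E F : ℝ) (k₁ k₂ k₃ : ℤ), 0 ≤ E → 0 ≤ F →
        ((max |k₁| (max |k₂| |k₃|) : ℤ) : ℝ) > 8 * max (|γ| * E) (|γ| * F) →
        (k₁ + k₂) * (k₂ + k₃) * (k₁ + k₃) ≠ 0 →
        (8 * |k₂| < |k₁| ∨ 8 * |k₃| < |k₁| ∨ 8 * |k₁| < |k₂| ∨
          8 * |k₃| < |k₂| ∨ 8 * |k₁| < |k₃| ∨ 8 * |k₂| < |k₃|) →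
        Phi3 γ E k₁ k₂ k₃ ≠ 0 ∧ Phi3 γ F k₁ k₂ k₃ ≠ 0 ∧
        C⁻¹ * ((min (|k₁ + k₂|) (min (|k₁ + k₃|) (|k₂ + k₃|)) : ℤ) : ℝ) *
            ((max |k₁| (max |k₂| |k₃|) : ℤ) : ℝ) ^ 4 ≤ ‖Phi3 γ E k₁ k₂ k₃‖ ∧
        ‖(Phi3 γ E k₁ k₂ k₃)⁻¹ - (Phi3 γ F k₁ k₂ k₃)⁻¹‖ ≤
          C * |γ| * |E - F| * (((max |k₁| (max |k₂| |k₃|) : ℤ) : ℝ) ^ 2)⁻¹ *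
            min (‖Phi3 γ E k₁ k₂ k₃‖)⁻¹ (‖Phi3 γ F k₁ k₂ k₃‖)⁻¹ := by
  refine ⟨8, by norm_num, ?_⟩
  intro γ E F k₁ k₂ k₃ hE hF hM hP hsep
  set M : ℤ := max |k₁| (max |k₂| |k₃|) with hMdef
  set m : ℤ := min (|k₁ + k₂|) (min (|k₁ + k₃|) (|k₂ + k₃|)) with hmdef
  set S : ℝ := (k₁:ℝ)^2 + (k₂:ℝ)^2 + (k₃:ℝ)^2 + ((k₁:ℝ)+(k₂:ℝ)+(k₃:ℝ))^2 with hSdef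
  set RE : ℝ := 5/2 * S - 6*γ*E with hREdef
  set RF : ℝ := 5/2 * S - 6*γ*F with hRFdef
  clear_value M m S RE RF
  -- basic facts
  have h1M : |k₁| ≤ M := by rw [hMdef]; exact le_max_left _ _
  have h2M : |k₂| ≤ M := by rw [hMdef]; exact le_trans (le_max_left _ _) (le_max_right _ _)
  have h3M : |k₃| ≤ M := by rw [hMdef]; exact le_trans (le_max_right _ _) (le_max_right _ _)
  have hM1 : (1:ℤ) ≤ M := by
    by_contra h
    push_neg at h
    have e1 : k₁ = 0 := by simp only [Int.abs_eq_natAbs] at h1M; omega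
    have e2 : k₂ = 0 := by simp only [Int.abs_eq_natAbs] at h2M; omega
    have e3 : k₃ = 0 := by simp only [Int.abs_eq_natAbs] at h3M; omega
    simp [e1, e2, e3] at hP
  have hMr1 : (1:ℝ) ≤ (M:ℝ) := by exact_mod_cast hM1
  have hMrpos : (0:ℝ) < (M:ℝ) := by linarith
  have hm0 : (0:ℤ) ≤ m := by
    rw [hmdef]; exact le_min (abs_nonneg _) (le_min (abs_nonneg _) (abs_nonneg _))
  have hmr0 : (0:ℝ) ≤ (m:ℝ) := by exact_mod_cast hm0
  have hm12 : m ≤ |k₁ + k₂| := by rw [hmdef]; exact min_le_left _ _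
  have hm13 : m ≤ |k₁ + k₃| := by rw [hmdef]; exact le_trans (min_le_right _ _) (min_le_left _ _)
  have hm23 : m ≤ |k₂ + k₃| := by rw [hmdef]; exact le_trans (min_le_right _ _) (min_le_right _ _)
  -- |γ|E and |γ|F bounds
  have hgE : 8 * (|γ| * E) < (M:ℝ) := lt_of_le_of_lt
    (by have := le_max_left (|γ| * E) (|γ| * F); linarith) hM
  have hgF : 8 * (|γ| * F) < (M:ℝ) := lt_of_le_of_lt
    (by have := le_max_right (|γ| * E) (|γ| * F); linarith) hM
  have hγE : γ * E ≤ |γ| * E := by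
    calc γ * E ≤ |γ * E| := le_abs_self _
    _ = |γ| * E := by rw [abs_mul, abs_of_nonneg hE]
  have hγF : γ * F ≤ |γ| * F := by
    calc γ * F ≤ |γ * F| := le_abs_self _
    _ = |γ| * F := by rw [abs_mul, abs_of_nonneg hF]
  -- S ≥ M²
  have hS : (M:ℝ)^2 ≤ S := by
    have hdisj : M = |k₁| ∨ M = |k₂| ∨ M = |k₃| := by
      rw [hMdef]; rcases le_total |k₁| (max |k₂| |k₃|) with h | h
      · rcases le_total |k₂| |k₃| with h' | h'
        · right; right; rw [max_eq_right h, max_eq_right h']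
        · right; left; rw [max_eq_right h, max_eq_left h']
      · left; exact max_eq_left h
    have key : ∀ k : ℤ, M = |k| → ((M:ℝ))^2 = (k:ℝ)^2 := by
      intro k hk
      have : (M:ℝ) = |(k:ℝ)| := by rw [hk]; push_cast [Int.cast_abs]; ring
      rw [this, sq_abs]
    rcases hdisj with h | h | h
    · rw [key k₁ h, hSdef]
      nlinarith [sq_nonneg ((k₁:ℝ)+(k₂:ℝ)+(k₃:ℝ)), sq_nonneg (k₂:ℝ), sq_nonneg (k₃:ℝ)]
    · rw [key k₂ h, hSdef]
      nlinarith [sq_nonneg ((k₁:ℝ)+(k₂:ℝ)+(k₃:ℝ)), sq_nonneg (k₁:ℝ), sq_nonneg (k₃:ℝ)]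
    · rw [key k₃ h, hSdef]
      nlinarith [sq_nonneg ((k₁:ℝ)+(k₂:ℝ)+(k₃:ℝ)), sq_nonneg (k₁:ℝ), sq_nonneg (k₂:ℝ)]
  -- R bounds
  have hMM : (M:ℝ) ≤ (M:ℝ)^2 := by nlinarith [hMr1, hMrpos]
  have hRE : 7/4 * (M:ℝ)^2 ≤ RE := by rw [hREdef]; linarith only [hS, hγE, hgE, hMM]
  have hRF : 7/4 * (M:ℝ)^2 ≤ RF := by rw [hRFdef]; linarith only [hS, hγF, hgF, hMM]
  have hREpos : 0 < RE := by linarith only [hRE, hMM, hMr1]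
  have hRFpos : 0 < RF := by linarith only [hRF, hMM, hMr1]
  -- |P| in reals
  set pr : ℝ := |(((k₁ + k₂) * (k₂ + k₃) * (k₁ + k₃) : ℤ) : ℝ)| with hprdef
  have hpr1 : (1:ℝ) ≤ pr := by
    rw [hprdef]
    have h0 : (1:ℝ) ≤ ((|(k₁ + k₂) * (k₂ + k₃) * (k₁ + k₃)| : ℤ) : ℝ) := by
      exact_mod_cast Int.one_le_abs hP
    rwa [Int.cast_abs] at h0
  clear_value pr
  have hpr0 : (0:ℝ) ≤ pr := by linarith
  -- abs formulas
  have hA : ‖Phi3 γ E k₁ k₂ k₃‖ = pr * RE := by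
    rw [phi_abs, ← hSdef, ← hREdef, abs_of_pos hREpos, ← hprdef]
  have hB : ‖Phi3 γ F k₁ k₂ k₃‖ = pr * RF := by
    rw [phi_abs, ← hSdef, ← hRFdef, abs_of_pos hRFpos, ← hprdef]
  have hApos : 0 < ‖Phi3 γ E k₁ k₂ k₃‖ := by
    rw [hA]; exact mul_pos (lt_of_lt_of_le one_pos hpr1) hREpos
  have hBpos : 0 < ‖Phi3 γ F k₁ k₂ k₃‖ := by
    rw [hB]; exact mul_pos (lt_of_lt_of_le one_pos hpr1) hRFpos
  have hΦE : Phi3 γ E k₁ k₂ k₃ ≠ 0 := by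
    intro h; rw [h] at hApos; simp at hApos
  have hΦF : Phi3 γ F k₁ k₂ k₃ ≠ 0 := by
    intro h; rw [h] at hBpos; simp at hBpos
  -- product lower bound: 9 m M² ≤ 64 pr
  have cast12 : ((|k₁ + k₂| : ℤ) : ℝ) = |((k₁:ℝ)+(k₂:ℝ))| := by push_cast [Int.cast_abs]; ring
  have cast23 : ((|k₂ + k₃| : ℤ) : ℝ) = |((k₂:ℝ)+(k₃:ℝ))| := by push_cast [Int.cast_abs]; ring
  have cast13 : ((|k₁ + k₃| : ℤ) : ℝ) = |((k₁:ℝ)+(k₃:ℝ))| := by push_cast [Int.cast_abs]; ring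
  have hprm : 9 * (m:ℝ) * (M:ℝ)^2 ≤ 64 * pr := by
    have hpr_eq : pr = |((k₁:ℝ)+(k₂:ℝ))| * |((k₂:ℝ)+(k₃:ℝ))| * |((k₁:ℝ)+(k₃:ℝ))| := by
      rw [hprdef, ← abs_mul, ← abs_mul]; push_cast; ring
    have ha0 : (0:ℝ) ≤ |((k₁:ℝ)+(k₂:ℝ))| := abs_nonneg _
    have hb0 : (0:ℝ) ≤ |((k₂:ℝ)+(k₃:ℝ))| := abs_nonneg _
    have hc0 : (0:ℝ) ≤ |((k₁:ℝ)+(k₃:ℝ))| := abs_nonneg _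
    have hm12r : (m:ℝ) ≤ |((k₁:ℝ)+(k₂:ℝ))| := by rw [← cast12]; exact_mod_cast hm12
    have hm23r : (m:ℝ) ≤ |((k₂:ℝ)+(k₃:ℝ))| := by rw [← cast23]; exact_mod_cast hm23
    have hm13r : (m:ℝ) ≤ |((k₁:ℝ)+(k₃:ℝ))| := by rw [← cast13]; exact_mod_cast hm13
    rcases twoBig k₁ k₂ k₃ hsep with ⟨hx, hy⟩ | ⟨hx, hy⟩ | ⟨hx, hy⟩
    · have hx' : 3 * (M:ℝ) ≤ 8 * |((k₁:ℝ)+(k₂:ℝ))| := by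
        rw [← cast12]; rw [hMdef]; exact_mod_cast hx
      have hy' : 3 * (M:ℝ) ≤ 8 * |((k₁:ℝ)+(k₃:ℝ))| := by
        rw [← cast13]; rw [hMdef]; exact_mod_cast hy
      rw [hpr_eq]
      nlinarith [mul_le_mul hx' hy' (by linarith) (by linarith),
        mul_le_mul_of_nonneg_left hm23r (mul_nonneg ha0 hc0), sq_nonneg ((M:ℝ)), hmr0, hMrpos]
    · have hx' : 3 * (M:ℝ) ≤ 8 * |((k₁:ℝ)+(k₂:ℝ))| := by
        rw [← cast12]; rw [hMdef]; exact_mod_cast hx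
      have hy' : 3 * (M:ℝ) ≤ 8 * |((k₂:ℝ)+(k₃:ℝ))| := by
        rw [← cast23]; rw [hMdef]; exact_mod_cast hy
      rw [hpr_eq]
      nlinarith [mul_le_mul hx' hy' (by linarith) (by linarith),
        mul_le_mul_of_nonneg_left hm13r (mul_nonneg ha0 hb0), sq_nonneg ((M:ℝ)), hmr0, hMrpos]
    · have hx' : 3 * (M:ℝ) ≤ 8 * |((k₁:ℝ)+(k₃:ℝ))| := by
        rw [← cast13]; rw [hMdef]; exact_mod_cast hx
      have hy' : 3 * (M:ℝ) ≤ 8 * |((k₂:ℝ)+(k₃:ℝ))| := by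
        rw [← cast23]; rw [hMdef]; exact_mod_cast hy
      rw [hpr_eq]
      nlinarith [mul_le_mul hx' hy' (by linarith) (by linarith),
        mul_le_mul_of_nonneg_left hm12r (mul_nonneg hc0 hb0), sq_nonneg ((M:ℝ)), hmr0, hMrpos]
  refine ⟨hΦE, hΦF, ?_, ?_⟩
  · -- lower bound
    rw [hA]
    have h1 : pr * (7/4 * (M:ℝ)^2) ≤ pr * RE := mul_le_mul_of_nonneg_left hRE hpr0
    have h2 : (9/64 * ((m:ℝ) * (M:ℝ)^2)) * (7/4 * (M:ℝ)^2) ≤ pr * (7/4 * (M:ℝ)^2) := by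
      have hfac : (0:ℝ) ≤ 7/4 * (M:ℝ)^2 := by positivity
      have hle : 9/64 * ((m:ℝ) * (M:ℝ)^2) ≤ pr := by linarith only [hprm]
      exact mul_le_mul_of_nonneg_right hle hfac
    have h3 : (0:ℝ) ≤ (m:ℝ) * (M:ℝ)^4 := by positivity
    linarith only [h1, h2, h3]
  · -- Lipschitz bound
    set A := ‖Phi3 γ E k₁ k₂ k₃‖ with hAdef
    set B := ‖Phi3 γ F k₁ k₂ k₃‖ with hBdef
    clear_value A B
    have hdiff : (Phi3 γ E k₁ k₂ k₃)⁻¹ - (Phi3 γ F k₁ k₂ k₃)⁻¹ =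
        (Phi3 γ F k₁ k₂ k₃ - Phi3 γ E k₁ k₂ k₃) * (Phi3 γ E k₁ k₂ k₃)⁻¹ *
          (Phi3 γ F k₁ k₂ k₃)⁻¹ := by
      field_simp
    have hsub : Phi3 γ F k₁ k₂ k₃ - Phi3 γ E k₁ k₂ k₃ =
        -Complex.I * (((k₁ + k₂) * (k₂ + k₃) * (k₁ + k₃) : ℤ) : ℂ) * ((6*γ*(E - F) : ℝ) : ℂ) := by
      rw [phi_eq, phi_eq]; push_cast; ring
    have hLHS : ‖(Phi3 γ E k₁ k₂ k₃)⁻¹ - (Phi3 γ F k₁ k₂ k₃)⁻¹‖ =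
        pr * (6 * |γ| * |E - F|) * A⁻¹ * B⁻¹ := by
      rw [hdiff, norm_mul, norm_mul, norm_inv, norm_inv, hsub, norm_mul, norm_mul,
        norm_neg, Complex.norm_I, one_mul, Complex.norm_intCast, Complex.norm_real, Real.norm_eq_abs,
        ← hAdef, ← hBdef, ← hprdef]
      rw [abs_mul, abs_mul, abs_of_nonneg (by norm_num : (0:ℝ) ≤ 6)]
    rw [hLHS]
    have hg0 : (0:ℝ) ≤ |γ| * |E - F| := mul_nonneg (abs_nonneg _) (abs_nonneg _)
    have hMsqpos : (0:ℝ) < (M:ℝ)^2 := by positivity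
    rcases le_total A B with hAB | hAB
    · rw [min_eq_right (inv_anti₀ hApos hAB)]
      have key : 6 * pr / A ≤ 8 / (M:ℝ)^2 := by
        rw [div_le_div_iff₀ hApos hMsqpos]
        have h5 : pr * (7/4 * (M:ℝ)^2) ≤ pr * RE := mul_le_mul_of_nonneg_left hRE hpr0
        have hnn : (0:ℝ) ≤ pr * (M:ℝ)^2 := mul_nonneg hpr0 (le_of_lt hMsqpos)
        linarith only [h5, hnn, hA]
      calc pr * (6 * |γ| * |E - F|) * A⁻¹ * B⁻¹
          = (6 * pr / A) * ((|γ| * |E - F|) * B⁻¹) := by ring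
        _ ≤ (8 / (M:ℝ)^2) * ((|γ| * |E - F|) * B⁻¹) := by
            apply mul_le_mul_of_nonneg_right key
            have : (0:ℝ) ≤ B⁻¹ := le_of_lt (inv_pos.mpr hBpos)
            exact mul_nonneg hg0 this
        _ = 8 * |γ| * |E - F| * (((M:ℝ))^2)⁻¹ * B⁻¹ := by ring
    · rw [min_eq_left (inv_anti₀ hBpos hAB)]
      have key : 6 * pr / B ≤ 8 / (M:ℝ)^2 := by
        rw [div_le_div_iff₀ hBpos hMsqpos]
        have h5 : pr * (7/4 * (M:ℝ)^2) ≤ pr * RF := mul_le_mul_of_nonneg_left hRF hpr0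
        have hnn : (0:ℝ) ≤ pr * (M:ℝ)^2 := mul_nonneg hpr0 (le_of_lt hMsqpos)
        linarith only [h5, hnn, hB]
      calc pr * (6 * |γ| * |E - F|) * A⁻¹ * B⁻¹
          = (6 * pr / B) * ((|γ| * |E - F|) * A⁻¹) := by ring
        _ ≤ (8 / (M:ℝ)^2) * ((|γ| * |E - F|) * A⁻¹) := by
            apply mul_le_mul_of_nonneg_right key
            have : (0:ℝ) ≤ A⁻¹ := le_of_lt (inv_pos.mpr hApos)
            exact mul_nonneg hg0 this
        _ = 8 * |γ| * |E - F| * (((M:ℝ))^2)⁻¹ * A⁻¹ := by ring
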